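/- arXiv:2202.07187 — 2 statements merged into one kernel-verified Lean document; each statement's English description precedes it below -/
import Mathlib

section
/- Let P₂ ∈ ℝ^{n×(n−k)} and Q₂ ∈ ℝ^{n×(n−k)} have orthonormal columns and suppose σ_min(P₂ᵀQ₂) ≥ 1 − ξ for some ξ ∈ (0,1]. If moreover P₂ᵀQ₂ is diagonal with diagonal entries σ_i ≥ 1 − ξ (which can be arranged by choosing the bases given by the singular vectors), then ‖P₂ − Q₂‖ ≤ √(2ξ). -/
open scoped Matrix.Norms.L2Operator
open Matrix

/-- The smallest singular value of a (possibly rectangular) real matrix: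
the infimum of `‖M x‖` over unit vectors `x` (Euclidean norms). -/
noncomputable def sigmaMin {m n : ℕ} (M : Matrix (Fin m) (Fin n) ℝ) : ℝ :=
  sInf {r : ℝ | ∃ x : Fin n → ℝ,
    ‖(WithLp.equiv 2 (Fin n → ℝ)).symm x‖ = 1 ∧
    r = ‖(WithLp.equiv 2 (Fin m → ℝ)).symm (M *ᵥ x)‖}

/-! For orthonormal column frames `A`, `B` whose cross-Gram matrix `Aᵀ B` is diagonal (principal
bases), the Gram matrix of `A - B` is `diag (2 - 2 σᵢ)`. Its diagonal is nonnegative, so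
`σᵢ ≤ 1`, and together with `σᵢ ≥ 1 - ξ` the C⋆-identity `‖A - B‖² = ‖(A - B)ᵀ (A - B)‖` gives
`‖A - B‖² ≤ 2ξ`, the operator norm of a diagonal matrix being the largest modulus of its
entries. -/

namespace Matrix

variable {m n : Type*} [Fintype m] [DecidableEq n]

theorem transpose_mul_self_sub_eq_diagonal {R : Type*} [CommRing R] {A B : Matrix m n R}
    {σ : n → R} (hA : Aᵀ * A = 1) (hB : Bᵀ * B = 1) (hAB : Aᵀ * B = diagonal σ) :
    (A - B)ᵀ * (A - B) = diagonal fun i => 2 - 2 * σ i := by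
  have hBA : Bᵀ * A = diagonal σ := by
    rw [← transpose_transpose A, ← transpose_mul, hAB, diagonal_transpose]
  rw [transpose_sub, Matrix.sub_mul, Matrix.mul_sub, Matrix.mul_sub, hA, hB, hAB, hBA]
  ext i j
  by_cases h : i = j
  · subst h; simp only [sub_apply, one_apply_eq, diagonal_apply_eq]; ring
  · simp [h]

theorem le_one_of_transpose_mul_eq_diagonal {A B : Matrix m n ℝ} {σ : n → ℝ}
    (hA : Aᵀ * A = 1) (hB : Bᵀ * B = 1) (hAB : Aᵀ * B = diagonal σ) (i : n) : σ i ≤ 1 := by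
  have hgram_nonneg : 0 ≤ ((A - B)ᵀ * (A - B)) i i := by
    simp only [mul_apply, transpose_apply]
    exact Finset.sum_nonneg fun j _ => mul_self_nonneg _
  rw [transpose_mul_self_sub_eq_diagonal hA hB hAB, diagonal_apply_eq] at hgram_nonneg
  linarith

end Matrix

theorem norm_sub_le_of_close_subspaces_general {n m : ℕ}
    (P₂ Q₂ : Matrix (Fin n) (Fin m) ℝ) (ξ : ℝ) (hξ : ξ ∈ Set.Ioc (0 : ℝ) 1)
    (hP : P₂ᵀ * P₂ = 1) (hQ : Q₂ᵀ * Q₂ = 1)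
    (σ : Fin m → ℝ) (hdiag : P₂ᵀ * Q₂ = Matrix.diagonal σ)
    (hσ : ∀ i, 1 - ξ ≤ σ i) :
    ‖P₂ - Q₂‖ ≤ Real.sqrt (2 * ξ) := by
  have hξ₀ : 0 ≤ 2 * ξ := by linarith [hξ.1]
  have hσ₁ := le_one_of_transpose_mul_eq_diagonal hP hQ hdiag
  have hsq : ‖P₂ - Q₂‖ ^ 2 ≤ 2 * ξ := by
    rw [sq, ← l2_opNorm_conjTranspose_mul_self, conjTranspose_eq_transpose_of_trivial,
      transpose_mul_self_sub_eq_diagonal hP hQ hdiag, l2_opNorm_diagonal]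
    refine (pi_norm_le_iff_of_nonneg hξ₀).2 fun i => ?_
    rw [Real.norm_eq_abs, abs_le]
    constructor <;> linarith [hσ i, hσ₁ i]
  exact (Real.le_sqrt (norm_nonneg _) hξ₀).2 hsq

/-- If `P₂`, `Q₂` have orthonormal columns, `σ_min(P₂ᵀ Q₂) ≥ 1 - ξ`, and `P₂ᵀ Q₂` is
diagonal with diagonal entries `σ_i ≥ 1 - ξ` for `ξ ∈ (0, 1]`, then `‖P₂ - Q₂‖ ≤ √(2ξ)`. -/
theorem norm_sub_le_of_close_subspaces {n m : ℕ}
    (P₂ Q₂ : Matrix (Fin n) (Fin m) ℝ) (ξ : ℝ) (hξ : ξ ∈ Set.Ioc (0 : ℝ) 1)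
    (hP : P₂ᵀ * P₂ = 1) (hQ : Q₂ᵀ * Q₂ = 1)
    (hmin : 1 - ξ ≤ sigmaMin (P₂ᵀ * Q₂))
    (σ : Fin m → ℝ) (hdiag : P₂ᵀ * Q₂ = Matrix.diagonal σ)
    (hσ : ∀ i, 1 - ξ ≤ σ i) :
    ‖P₂ - Q₂‖ ≤ Real.sqrt (2 * ξ) :=
  norm_sub_le_of_close_subspaces_general P₂ Q₂ ξ hξ hP hQ σ hdiag hσ
end

section
/- (Bauer–Fike) If A ∈ ℂ^{n×n} is diagonalizable, A = SΛS⁻¹ with Λ diagonal, then for any E ∈ ℂ^{n×n} and any eigenvalue μ of A+E, there exists an eigenvalue λ of A with |μ − λ| ≤ κ(S)·‖E‖, where κ(S) = ‖S‖·‖S⁻¹‖. -/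
/-!
Conjugating by `S` turns `A + E` into `Λ + S⁻¹ E S` without changing the spectrum. If `μ` were
farther than `‖S⁻¹ E S‖` from every `dᵢ`, then `μ - Λ` would be invertible with
`‖(μ - Λ)⁻¹‖ = maxᵢ |μ - dᵢ|⁻¹ < ‖S⁻¹ E S‖⁻¹`, and a Neumann series would make
`μ - (Λ + S⁻¹ E S)` invertible as well.
-/

open scoped Matrix.Norms.L2Operator
open Matrix

theorem spectrum.units_conjugate_add {R A : Type*} [CommSemiring R] [Ring A] [Algebra R A]
    (a b : A) (u : Aˣ) : spectrum R (u * a * u⁻¹ + b) = spectrum R (a + u⁻¹ * b * u) := by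
  rw [← spectrum.units_conjugate (u := u) (a := a + u⁻¹ * b * u)]
  simp [mul_add, add_mul, mul_assoc]

theorem spectrum.one_le_norm_resolvent_mul_norm_of_mem_add {𝕜 A : Type*} [NormedField 𝕜]
    [NormedRing A] [NormedAlgebra 𝕜 A] [HasSummableGeomSeries A] {a b : A} {μ : 𝕜}
    (hμ : μ ∈ spectrum 𝕜 (a + b)) (ha : μ ∈ resolventSet 𝕜 a) :
    1 ≤ ‖resolvent a μ‖ * ‖b‖ := by
  by_contra! h
  have hsmall : ‖resolvent a μ * b‖ < 1 := (norm_mul_le _ _).trans_lt h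
  have hfactor : algebraMap 𝕜 A μ - (a + b) =
      (algebraMap 𝕜 A μ - a) * (1 - resolvent a μ * b) := by
    rw [mul_sub, mul_one, ← mul_assoc, resolvent, Ring.mul_inverse_cancel _ ha, one_mul]
    abel
  apply spectrum.mem_iff.1 hμ
  rw [hfactor]
  exact ha.mul (Units.oneSub _ hsmall).isUnit

theorem Matrix.resolvent_diagonal {n 𝕜 : Type*} [Fintype n] [DecidableEq n] [Field 𝕜]
    {d : n → 𝕜} {μ : 𝕜} (hμ : ∀ i, d i ≠ μ) :
    resolvent (diagonal d) μ = diagonal fun i => (μ - d i)⁻¹ := by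
  rw [resolvent, ← nonsing_inv_eq_ringInverse, algebraMap_eq_diagonal, diagonal_sub]
  refine inv_eq_right_inv ?_
  rw [diagonal_mul_diagonal, ← diagonal_one]
  congr 1
  funext i
  exact mul_inv_cancel₀ (sub_ne_zero.2 (hμ i).symm)

theorem Matrix.exists_norm_sub_le_of_mem_spectrum_diagonal_add {n 𝕜 : Type*} [Fintype n]
    [DecidableEq n] [RCLike 𝕜] {d : n → 𝕜} {F : Matrix n n 𝕜} {μ : 𝕜}
    (hμ : μ ∈ spectrum 𝕜 (diagonal d + F)) : ∃ i, ‖μ - d i‖ ≤ ‖F‖ := by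
  by_contra! h
  have hd : ∀ i, d i ≠ μ := fun i hi => by simpa [hi] using (norm_nonneg F).trans_lt (h i)
  have hres : μ ∈ resolventSet 𝕜 (diagonal d) := by
    refine spectrum.mem_resolventSet_iff.2 (spectrum.notMem_iff.1 ?_)
    rw [spectrum_diagonal]
    rintro ⟨i, hi⟩
    exact hd i hi
  have hone := spectrum.one_le_norm_resolvent_mul_norm_of_mem_add hμ hres
  rw [resolvent_diagonal hd, l2_opNorm_diagonal] at hone
  rcases (norm_nonneg F).eq_or_lt with hF | hF
  · rw [← hF, mul_zero] at hone
    exact zero_lt_one.not_ge hone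
  have hsup : ‖fun i => (μ - d i)⁻¹‖ < ‖F‖⁻¹ :=
    (pi_norm_lt_iff (inv_pos.2 hF)).2 fun i => by
      rw [norm_inv]; exact inv_strictAnti₀ hF (h i)
  have := mul_lt_mul_of_pos_right hsup hF
  rw [inv_mul_cancel₀ hF.ne'] at this
  exact this.not_ge hone

/-- Bauer–Fike: if `A = S Λ S⁻¹` is diagonalizable, then every eigenvalue `μ` of `A + E`
is within distance `κ(S) ‖E‖ = ‖S‖ ‖S⁻¹‖ ‖E‖` of some eigenvalue `λ` of `A`. -/
theorem bauer_fike {n : ℕ} (A E S : Matrix (Fin n) (Fin n) ℂ) (d : Fin n → ℂ)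
    (hS : IsUnit S) (hA : A = S * Matrix.diagonal d * S⁻¹) :
    ∀ μ ∈ spectrum ℂ (A + E), ∃ lam ∈ spectrum ℂ A,
      ‖μ - lam‖ ≤ ‖S‖ * ‖S⁻¹‖ * ‖E‖ := by
  intro μ hμ
  obtain ⟨u, rfl⟩ := hS
  rw [← coe_units_inv] at hA ⊢
  rw [hA, spectrum.units_conjugate_add] at hμ
  obtain ⟨i, hi⟩ := exists_norm_sub_le_of_mem_spectrum_diagonal_add hμ
  have hdi : d i ∈ spectrum ℂ A := by
    rw [hA, spectrum.units_conjugate, spectrum_diagonal]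
    exact ⟨i, rfl⟩
  refine ⟨d i, hdi, hi.trans ?_⟩
  calc _ ≤ ‖(↑u⁻¹ : Matrix (Fin n) (Fin n) ℂ)‖ * ‖E‖ * ‖(u : Matrix (Fin n) (Fin n) ℂ)‖ :=
        (l2_opNorm_mul _ _).trans (by gcongr; exact l2_opNorm_mul _ _)
    _ = _ := by ring
end
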